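/- For any μ₁, μ₂, λ > 0, the total variation distance between IG(μ₁, λ) and IG(μ₂, λ) is at most √(4λ/(π·min{μ₁, μ₂})) (indeed at most 2√(λ/(π·min{μ₁,μ₂}))). -/

import Mathlib

open MeasureTheory

/-- density of the inverse Gaussian distribution `IG(μ,λ)` on `(0,∞)` -/
noncomputable def igPdf (μ lam x : ℝ) : ℝ :=
  Real.sqrt (lam / (2 * Real.pi * x ^ 3)) * Real.exp (-lam * (x - μ) ^ 2 / (2 * μ ^ 2 * x))

/-- the inverse Gaussian distribution `IG(μ,λ)` as a measure on `ℝ` -/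
noncomputable def igMeasure (μ lam : ℝ) : Measure ℝ :=
  volume.withDensity fun x => ENNReal.ofReal (if 0 < x then igPdf μ lam x else 0)

/-!
The substitution `x = λ / u²` turns the density of `IG(μ, λ)` into
`√(2 / π) · exp (-(u - β / u)² / 2)` on `(0, ∞)` with `β = λ / μ`, and the Cauchy–Schlömilch
substitution `v = u - β / u` (together with the symmetry `u ↦ β / u`) evaluates its integral; so
both laws are probability measures and `|P s - Q s| ≤ ‖f₁ - f₂‖₁ / 2`.

For `μ₁ ≤ μ₂` and `x ≤ μ₁` the two exponents differ by at most `λ / μ₁`, so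
`|f₁ - f₂| ≤ (λ / μ₁) f₁` there; for `x > μ₁` both densities lie below `√(λ / (2π x³))`, whose
integral over `(μ₁, ∞)` is `√(2λ / (π μ₁))`. With `r = √(λ / (π μ₁))` this gives
`TV ≤ (π r² + √2 r) / 2 ≤ 2 r` when `r < 1/2`, and for `r ≥ 1/2` the bound exceeds `1`.
-/

open Set Real

section DivPow

variable {E : Type*} [NormedAddCommGroup E] [NormedSpace ℝ E] {c : ℝ} {n : ℕ}

lemma strictAntiOn_div_pow (hc : 0 < c) (hn : n ≠ 0) :
    StrictAntiOn (fun u : ℝ => c / u ^ n) (Ioi 0) := fun _ hu _ _ huv =>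
  div_lt_div_of_pos_left hc (pow_pos hu n) (pow_lt_pow_left₀ huv (le_of_lt hu) hn)

lemma image_div_pow_Ioi (hc : 0 < c) (hn : n ≠ 0) :
    (fun u : ℝ => c / u ^ n) '' Ioi 0 = Ioi 0 := by
  refine (image_subset_iff.2 fun u hu => div_pos hc (pow_pos hu n)).antisymm
    fun x (hx : 0 < x) => ?_
  have hcx : 0 < c / x := div_pos hc hx
  refine ⟨(c / x) ^ (n⁻¹ : ℝ), rpow_pos_of_pos hcx _, ?_⟩
  simp only [rpow_inv_natCast_pow hcx.le hn]
  field_simp [ne_of_gt hx]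

lemma hasDerivAt_div_pow {u : ℝ} (hu : u ≠ 0) :
    HasDerivAt (fun u => c / u ^ n) (-(n * c / u ^ (n + 1))) u := by
  refine ((hasDerivAt_const u c).div (hasDerivAt_pow n u) (pow_ne_zero n hu)).congr_deriv ?_
  rcases n with _ | m
  · simp
  · simp only [Nat.add_sub_cancel]
    field_simp
    ring

lemma abs_deriv_div_pow {u : ℝ} (hc : 0 < c) (hu : 0 < u) :
    |-(n * c / u ^ (n + 1))| = n * c / u ^ (n + 1) := by
  rw [abs_neg, abs_of_nonneg (by positivity)]

theorem integrableOn_Ioi_comp_div_pow_iff (hc : 0 < c) (hn : n ≠ 0) (f : ℝ → E) :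
    IntegrableOn (fun u => (n * c / u ^ (n + 1)) • f (c / u ^ n)) (Ioi 0) ↔
      IntegrableOn f (Ioi 0) := by
  have h := integrableOn_image_iff_integrableOn_abs_deriv_smul measurableSet_Ioi
    (fun u hu => (hasDerivAt_div_pow (ne_of_gt hu)).hasDerivWithinAt)
    (strictAntiOn_div_pow hc hn).injOn f
  rw [image_div_pow_Ioi hc hn] at h
  rw [h]
  refine integrableOn_congr_fun (fun u (hu : 0 < u) => ?_) measurableSet_Ioi
  rw [abs_deriv_div_pow hc hu]

theorem integral_comp_div_pow_Ioi (hc : 0 < c) (hn : n ≠ 0) (f : ℝ → E) :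
    ∫ u in Ioi 0, (n * c / u ^ (n + 1)) • f (c / u ^ n) = ∫ x in Ioi 0, f x := by
  have h := integral_image_eq_integral_abs_deriv_smul measurableSet_Ioi
    (fun u hu => (hasDerivAt_div_pow (ne_of_gt hu)).hasDerivWithinAt)
    (strictAntiOn_div_pow hc hn).injOn f
  rw [image_div_pow_Ioi hc hn] at h
  rw [h]
  refine setIntegral_congr_fun measurableSet_Ioi fun u (hu : 0 < u) => ?_
  rw [abs_deriv_div_pow hc hu]

end DivPow

section CauchySchlomilch

variable {β : ℝ}

lemma strictMonoOn_sub_div (hβ : 0 ≤ β) : StrictMonoOn (fun u : ℝ => u - β / u) (Ioi 0) :=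
  fun u hu _ _ huv => by
    have := div_le_div_of_nonneg_left hβ hu (le_of_lt huv)
    dsimp only
    linarith

lemma image_sub_div_Ioi (hβ : 0 < β) : (fun u : ℝ => u - β / u) '' Ioi 0 = univ := by
  refine eq_univ_of_forall fun v => ?_
  -- the positive root of `u ^ 2 - v * u - β`
  have hD : |v| < √(v ^ 2 + 4 * β) := by
    rw [← sqrt_sq_eq_abs]; exact sqrt_lt_sqrt (sq_nonneg v) (by linarith)
  have hpos : 0 < v + √(v ^ 2 + 4 * β) := by linarith [neg_abs_le v]
  refine ⟨_, half_pos hpos, ?_⟩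
  have hsq := sq_sqrt (by positivity : 0 ≤ v ^ 2 + 4 * β)
  field_simp [hpos.ne']
  linear_combination hsq

lemma hasDerivAt_sub_div {u : ℝ} (hu : u ≠ 0) :
    HasDerivAt (fun u => u - β / u) (1 + β / u ^ 2) u := by
  have h := (hasDerivAt_id u).sub (hasDerivAt_div_pow (c := β) (n := 1) hu)
  simp only [pow_one, Nat.cast_one, one_mul, sub_neg_eq_add] at h
  exact h

lemma abs_one_add_div_sq (hβ : 0 ≤ β) (u : ℝ) : |1 + β / u ^ 2| = 1 + β / u ^ 2 :=
  abs_of_nonneg (by positivity)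

theorem integrableOn_comp_sub_div (hβ : 0 < β) {g : ℝ → ℝ} (hg : Integrable g) :
    IntegrableOn (fun u => g (u - β / u)) (Ioi 0) := by
  have h := integrableOn_image_iff_integrableOn_abs_deriv_smul measurableSet_Ioi
    (fun u hu => (hasDerivAt_sub_div (ne_of_gt hu)).hasDerivWithinAt)
    (strictMonoOn_sub_div hβ.le).injOn g
  rw [image_sub_div_Ioi hβ, integrableOn_univ] at h
  have hw : ∀ u : ℝ, ‖(1 + β / u ^ 2)⁻¹‖ ≤ 1 := fun u => by
    rw [norm_inv, Real.norm_eq_abs, abs_one_add_div_sq hβ.le]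
    exact inv_le_one_of_one_le₀ (by simp only [le_add_iff_nonneg_right]; positivity)
  have hm : Measurable fun u : ℝ => (1 + β / u ^ 2)⁻¹ := by fun_prop
  have hI : IntegrableOn (fun u => (1 + β / u ^ 2)⁻¹ * |1 + β / u ^ 2| • g (u - β / u)) (Ioi 0) :=
    (h.1 hg).bdd_mul hm.aestronglyMeasurable (ae_of_all _ hw)
  refine hI.congr_fun (fun u _ => ?_) measurableSet_Ioi
  dsimp only
  rw [smul_eq_mul, abs_one_add_div_sq hβ.le, inv_mul_cancel_left₀ (by positivity)]

theorem integral_comp_sub_div_of_even (hβ : 0 < β) {g : ℝ → ℝ} (hg : Integrable g)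
    (heven : ∀ v, g (-v) = g v) :
    ∫ u in Ioi 0, g (u - β / u) = (∫ v, g v) / 2 := by
  have hψ := integral_image_eq_integral_abs_deriv_smul measurableSet_Ioi
    (fun u hu => (hasDerivAt_sub_div (ne_of_gt hu)).hasDerivWithinAt)
    (strictMonoOn_sub_div hβ.le).injOn g
  rw [image_sub_div_Ioi hβ, setIntegral_univ] at hψ
  have hinv : ∀ u ∈ Ioi (0 : ℝ), ((1 : ℕ) * β / u ^ (1 + 1)) • g (β / u ^ 1 - β / (β / u ^ 1))
      = β / u ^ 2 * g (u - β / u) := fun u (hu : 0 < u) => by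
    have hneg : β / u ^ 1 - β / (β / u ^ 1) = -(u - β / u) := by
      field_simp
      ring
    rw [hneg, heven, smul_eq_mul]
    norm_num
  have hI := integrableOn_comp_sub_div hβ hg
  have hI' := (integrableOn_Ioi_comp_div_pow_iff hβ one_ne_zero _).2 hI
  have hsym := integral_comp_div_pow_Ioi hβ one_ne_zero fun u => g (u - β / u)
  rw [setIntegral_congr_fun measurableSet_Ioi hinv] at hsym
  rw [integrableOn_congr_fun hinv measurableSet_Ioi] at hI'
  rw [setIntegral_congr_fun measurableSet_Ioi fun u _ => by
    rw [smul_eq_mul, abs_one_add_div_sq hβ.le, add_mul, one_mul], integral_add hI hI', hsym] at hψ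
  linarith

end CauchySchlomilch

lemma integrable_exp_neg_sq_div_two : Integrable fun v : ℝ => exp (-v ^ 2 / 2) :=
  (integrable_exp_neg_mul_sq one_half_pos).congr (ae_of_all _ fun v => by ring_nf)

lemma integral_exp_neg_sq_div_two : ∫ v : ℝ, exp (-v ^ 2 / 2) = √(2 * π) := by
  simp_rw [show ∀ v : ℝ, -v ^ 2 / 2 = -(1 / 2) * v ^ 2 from fun v => by ring]
  rw [integral_gaussian, div_div_eq_mul_div, div_one, mul_comm]

theorem integral_exp_neg_sub_div_sq_div_two {β : ℝ} (hβ : 0 < β) :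
    ∫ u in Ioi 0, exp (-(u - β / u) ^ 2 / 2) = √(2 * π) / 2 := by
  rw [integral_comp_sub_div_of_even hβ integrable_exp_neg_sq_div_two fun v => by rw [neg_sq],
    integral_exp_neg_sq_div_two]

lemma sqrt_div_pow_three_eq {c x : ℝ} (hx : 0 < x) : √(c / x ^ 3) = √c * x ^ (-(3 / 2) : ℝ) := by
  have h : √(x ^ 3) = x ^ (3 / 2 : ℝ) := by
    rw [sqrt_eq_rpow, ← rpow_natCast, ← rpow_mul hx.le]
    norm_num
  rw [sqrt_div' _ (by positivity), h, rpow_neg hx.le, div_eq_mul_inv]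

theorem integrableOn_Ioi_sqrt_div_pow_three (c : ℝ) {m : ℝ} (hm : 0 < m) :
    IntegrableOn (fun x => √(c / x ^ 3)) (Ioi m) :=
  IntegrableOn.congr_fun
    ((integrableOn_Ioi_rpow_of_lt (a := -(3 / 2)) (by norm_num) hm).const_mul √c)
    (fun x hx => (sqrt_div_pow_three_eq (hm.trans hx)).symm) measurableSet_Ioi

theorem integral_Ioi_sqrt_div_pow_three (c : ℝ) {m : ℝ} (hm : 0 < m) :
    ∫ x in Ioi m, √(c / x ^ 3) = 2 * √(c / m) := by
  rw [setIntegral_congr_fun measurableSet_Ioi fun x hx => sqrt_div_pow_three_eq (hm.trans hx),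
    integral_const_mul, integral_Ioi_rpow_of_lt (a := -(3 / 2)) (by norm_num) hm,
    sqrt_div' _ hm.le, sqrt_eq_rpow m, show (-(3 / 2) + 1 : ℝ) = -(1 / 2) by norm_num,
    rpow_neg hm.le]
  ring

lemma abs_mul_exp_sub_mul_exp_le {C a b d : ℝ} (hC : 0 ≤ C) (hba : b ≤ a) (hd : a - b ≤ d) :
    |C * exp a - C * exp b| ≤ d * (C * exp a) := by
  have hexp : exp a * (1 - (a - b)) ≤ exp b :=
    calc exp a * (1 - (a - b)) = exp a * ((b - a) + 1) := by ring
      _ ≤ exp a * exp (b - a) := by gcongr; exact add_one_le_exp _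
      _ = exp b := by rw [← exp_add, add_sub_cancel]
  have hCa : 0 ≤ C * exp a := by positivity
  rw [abs_of_nonneg (sub_nonneg.2 (mul_le_mul_of_nonneg_left (exp_le_exp.2 hba) hC))]
  nlinarith [mul_le_mul_of_nonneg_left hexp hC, mul_le_mul_of_nonneg_right hd hCa]

theorem abs_setIntegral_le_half_integral_abs {α : Type*} [MeasurableSpace α] {ν : Measure α}
    {g : α → ℝ} (hg : Integrable g ν) (hg0 : ∫ x, g x ∂ν = 0) {s : Set α}
    (hs : MeasurableSet s) :
    |∫ x in s, g x ∂ν| ≤ (∫ x, |g x| ∂ν) / 2 := by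
  have hcompl : |∫ x in s, g x ∂ν| = |∫ x in sᶜ, g x ∂ν| := by
    rw [← abs_neg, ← add_eq_zero_iff_neg_eq.1 ((integral_add_compl hs hg).trans hg0)]
  rw [← integral_add_compl hs hg.abs]
  linarith [abs_integral_le_integral_abs (μ := ν.restrict s) (f := g),
    abs_integral_le_integral_abs (μ := ν.restrict sᶜ) (f := g)]

lemma igPdf_nonneg (μ lam x : ℝ) : 0 ≤ igPdf μ lam x := by
  unfold igPdf; positivity

lemma mul_igPdf_div_sq {μ lam u : ℝ} (hμ : 0 < μ) (hl : 0 < lam) (hu : 0 < u) :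
    2 * lam / u ^ 3 * igPdf μ lam (lam / u ^ 2)
      = 2 / √(2 * π) * exp (-(u - lam / μ / u) ^ 2 / 2) := by
  have hsqrt : √(lam / (2 * π * (lam / u ^ 2) ^ 3)) = u ^ 3 / (lam * √(2 * π)) := by
    rw [show lam / (2 * π * (lam / u ^ 2) ^ 3) = (u ^ 3 / lam) ^ 2 / (2 * π) by
      field_simp, sqrt_div' _ (by positivity), sqrt_sq (by positivity)]
    field_simp
  have hexp : -lam * (lam / u ^ 2 - μ) ^ 2 / (2 * μ ^ 2 * (lam / u ^ 2))
      = -(u - lam / μ / u) ^ 2 / 2 := by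
    field_simp
    ring
  rw [igPdf, hsqrt, hexp]
  field_simp

theorem integrableOn_igPdf {μ lam : ℝ} (hμ : 0 < μ) (hl : 0 < lam) :
    IntegrableOn (igPdf μ lam) (Ioi 0) := by
  rw [← integrableOn_Ioi_comp_div_pow_iff hl two_ne_zero]
  norm_num only [smul_eq_mul]
  exact IntegrableOn.congr_fun
    ((integrableOn_comp_sub_div (div_pos hl hμ) integrable_exp_neg_sq_div_two).const_mul _)
    (fun u hu => (mul_igPdf_div_sq hμ hl hu).symm) measurableSet_Ioi

theorem integral_igPdf {μ lam : ℝ} (hμ : 0 < μ) (hl : 0 < lam) :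
    ∫ x in Ioi 0, igPdf μ lam x = 1 := by
  rw [← integral_comp_div_pow_Ioi hl two_ne_zero]
  norm_num only [smul_eq_mul]
  rw [setIntegral_congr_fun measurableSet_Ioi fun u (hu : 0 < u) => mul_igPdf_div_sq hμ hl hu,
    integral_const_mul, integral_exp_neg_sub_div_sq_div_two (div_pos hl hμ)]
  field_simp

lemma igMeasure_eq_withDensity (μ lam : ℝ) :
    igMeasure μ lam =
      (volume.restrict (Ioi 0)).withDensity fun x => ENNReal.ofReal (igPdf μ lam x) := by
  rw [igMeasure, ← withDensity_indicator measurableSet_Ioi]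
  congr 1
  ext x
  by_cases hx : 0 < x <;> simp [hx]

lemma igMeasure_apply {μ lam : ℝ} (hμ : 0 < μ) (hl : 0 < lam) {s : Set ℝ} (hs : MeasurableSet s) :
    igMeasure μ lam s = ENNReal.ofReal (∫ x in s, igPdf μ lam x ∂volume.restrict (Ioi 0)) := by
  rw [igMeasure_eq_withDensity, withDensity_apply _ hs,
    ← ofReal_integral_eq_lintegral_ofReal (Integrable.restrict (s := s) (integrableOn_igPdf hμ hl))
      (ae_of_all _ (igPdf_nonneg μ lam))]

theorem isProbabilityMeasure_igMeasure {μ lam : ℝ} (hμ : 0 < μ) (hl : 0 < lam) :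
    IsProbabilityMeasure (igMeasure μ lam) := by
  constructor
  rw [igMeasure_apply hμ hl MeasurableSet.univ, Measure.restrict_univ, integral_igPdf hμ hl,
    ENNReal.ofReal_one]

lemma toReal_igMeasure {μ lam : ℝ} (hμ : 0 < μ) (hl : 0 < lam) {s : Set ℝ}
    (hs : MeasurableSet s) :
    (igMeasure μ lam s).toReal = ∫ x in s, igPdf μ lam x ∂volume.restrict (Ioi 0) := by
  rw [igMeasure_apply hμ hl hs, ENNReal.toReal_ofReal (integral_nonneg (igPdf_nonneg μ lam))]

lemma igPdf_le_sqrt {μ lam x : ℝ} (hl : 0 ≤ lam) (hx : 0 ≤ x) :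
    igPdf μ lam x ≤ √(lam / (2 * π * x ^ 3)) := by
  refine mul_le_of_le_one_right (sqrt_nonneg _) (exp_le_one_iff.2 ?_)
  rw [neg_mul, neg_div, neg_nonpos]
  positivity

lemma abs_igPdf_sub_igPdf_le {μ₁ μ₂ lam x : ℝ} (h₁ : 0 < μ₁) (h₁₂ : μ₁ ≤ μ₂) (hl : 0 ≤ lam)
    (hx : 0 < x) (hxμ : x ≤ μ₁) :
    |igPdf μ₁ lam x - igPdf μ₂ lam x| ≤ lam / μ₁ * igPdf μ₁ lam x := by
  have h₂ : 0 < μ₂ := h₁.trans_le h₁₂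
  have hdiff : -lam * (x - μ₁) ^ 2 / (2 * μ₁ ^ 2 * x) - -lam * (x - μ₂) ^ 2 / (2 * μ₂ ^ 2 * x)
      = lam * (1 / μ₁ - 1 / μ₂) * (1 - x / 2 * (1 / μ₁ + 1 / μ₂)) := by
    field_simp
    ring
  have hp : 0 ≤ 1 / μ₁ - 1 / μ₂ := sub_nonneg.2 (one_div_le_one_div_of_le h₁ h₁₂)
  have hp' : 1 / μ₁ - 1 / μ₂ ≤ 1 / μ₁ := sub_le_self _ (by positivity)
  have hq : x / 2 * (1 / μ₁ + 1 / μ₂) ≤ 1 := by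
    have : x / μ₁ ≤ 1 := (div_le_one h₁).2 hxμ
    have : x / μ₂ ≤ 1 := (div_le_one h₂).2 (hxμ.trans h₁₂)
    calc x / 2 * (1 / μ₁ + 1 / μ₂) = (x / μ₁ + x / μ₂) / 2 := by ring
      _ ≤ 1 := by linarith
  have hq' : 0 ≤ x / 2 * (1 / μ₁ + 1 / μ₂) := by positivity
  refine abs_mul_exp_sub_mul_exp_le (sqrt_nonneg _) ?_ ?_
  · rw [← sub_nonneg, hdiff]
    exact mul_nonneg (mul_nonneg hl hp) (by linarith)
  · rw [hdiff]
    calc lam * (1 / μ₁ - 1 / μ₂) * (1 - x / 2 * (1 / μ₁ + 1 / μ₂)) ≤ lam * (1 / μ₁) * 1 :=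
          mul_le_mul (mul_le_mul_of_nonneg_left hp' hl) (by linarith) (by linarith)
            (by positivity)
      _ = lam / μ₁ := by ring

theorem integral_abs_igPdf_sub_le {μ₁ μ₂ lam : ℝ} (h₁ : 0 < μ₁) (h₁₂ : μ₁ ≤ μ₂) (hl : 0 < lam) :
    ∫ x in Ioi 0, |igPdf μ₁ lam x - igPdf μ₂ lam x| ≤ lam / μ₁ + √(2 * lam / (π * μ₁)) := by
  have hf₁ := integrableOn_igPdf h₁ hl
  have hG : IntegrableOn (fun x => |igPdf μ₁ lam x - igPdf μ₂ lam x|) (Ioi 0) :=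
    (hf₁.sub (integrableOn_igPdf (h₁.trans_le h₁₂) hl)).abs
  rw [← Ioc_union_Ioi_eq_Ioi h₁.le, setIntegral_union (Ioc_disjoint_Ioi le_rfl) measurableSet_Ioi
    (hG.mono_set Ioc_subset_Ioi_self) (hG.mono_set (Ioi_subset_Ioi h₁.le))]
  gcongr
  · calc ∫ x in Ioc 0 μ₁, |igPdf μ₁ lam x - igPdf μ₂ lam x|
        ≤ ∫ x in Ioc 0 μ₁, lam / μ₁ * igPdf μ₁ lam x :=
          setIntegral_mono_on (hG.mono_set Ioc_subset_Ioi_self)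
            ((hf₁.mono_set Ioc_subset_Ioi_self).const_mul _) measurableSet_Ioc
            fun x hx => abs_igPdf_sub_igPdf_le h₁ h₁₂ hl.le hx.1 hx.2
      _ ≤ lam / μ₁ * ∫ x in Ioi 0, igPdf μ₁ lam x := by
          rw [integral_const_mul]
          exact mul_le_mul_of_nonneg_left (setIntegral_mono_set hf₁
            (ae_of_all _ (igPdf_nonneg μ₁ lam)) Ioc_subset_Ioi_self.eventuallyLE) (by positivity)
      _ = lam / μ₁ := by rw [integral_igPdf h₁ hl, mul_one]
  · have henv := integrableOn_Ioi_sqrt_div_pow_three (lam / (2 * π)) h₁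
    calc ∫ x in Ioi μ₁, |igPdf μ₁ lam x - igPdf μ₂ lam x|
        ≤ ∫ x in Ioi μ₁, √(lam / (2 * π) / x ^ 3) :=
          setIntegral_mono_on (hG.mono_set (Ioi_subset_Ioi h₁.le)) henv measurableSet_Ioi
            fun x (hx : μ₁ < x) => by
              have hx0 := (h₁.trans hx).le
              rw [← div_mul_eq_div_div]
              exact abs_sub_le_of_nonneg_of_le (igPdf_nonneg _ _ _) (igPdf_le_sqrt hl.le hx0)
                (igPdf_nonneg _ _ _) (igPdf_le_sqrt hl.le hx0)
      _ = √(2 * lam / (π * μ₁)) := by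
          rw [integral_Ioi_sqrt_div_pow_three _ h₁, ← sqrt_sq zero_le_two,
            ← sqrt_mul (sq_nonneg 2)]
          congr 1
          field_simp
          ring

theorem abs_toReal_igMeasure_sub_le {μ₁ μ₂ lam : ℝ} (h₁ : 0 < μ₁) (h₁₂ : μ₁ ≤ μ₂) (hl : 0 < lam)
    {s : Set ℝ} (hs : MeasurableSet s) :
    |(igMeasure μ₁ lam s).toReal - (igMeasure μ₂ lam s).toReal|
      ≤ 2 * √(lam / (π * μ₁)) := by
  have h₂ := h₁.trans_le h₁₂
  set r := √(lam / (π * μ₁))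
  rcases le_or_gt 1 (2 * r) with hr | hr
  · have := isProbabilityMeasure_igMeasure h₁ hl
    have := isProbabilityMeasure_igMeasure h₂ hl
    exact (abs_sub_le_of_nonneg_of_le measureReal_nonneg measureReal_le_one measureReal_nonneg
      measureReal_le_one).trans hr
  have hr2 : lam / μ₁ = π * r ^ 2 := by
    rw [sq_sqrt (by positivity)]
    field_simp
  have hr' : √(2 * lam / (π * μ₁)) ≤ 2 * r :=
    calc √(2 * lam / (π * μ₁)) ≤ √(2 ^ 2 * (lam / (π * μ₁))) := by
          rw [mul_div_assoc]
          gcongr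
          norm_num
      _ = 2 * r := by rw [sqrt_mul (sq_nonneg 2), sqrt_sq zero_le_two]
  have hf₁ := integrableOn_igPdf h₁ hl
  have hf₂ := integrableOn_igPdf h₂ hl
  have hg : IntegrableOn (fun x => igPdf μ₁ lam x - igPdf μ₂ lam x) (Ioi 0) := hf₁.sub hf₂
  calc |(igMeasure μ₁ lam s).toReal - (igMeasure μ₂ lam s).toReal|
      = |∫ x in s, igPdf μ₁ lam x - igPdf μ₂ lam x ∂volume.restrict (Ioi 0)| := by
        rw [toReal_igMeasure h₁ hl hs, toReal_igMeasure h₂ hl hs,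
          integral_sub (Integrable.restrict (s := s) hf₁) (Integrable.restrict (s := s) hf₂)]
    _ ≤ (∫ x in Ioi 0, |igPdf μ₁ lam x - igPdf μ₂ lam x|) / 2 :=
        abs_setIntegral_le_half_integral_abs hg
          (by rw [integral_sub hf₁ hf₂, integral_igPdf h₁ hl, integral_igPdf h₂ hl, sub_self]) hs
    _ ≤ (lam / μ₁ + √(2 * lam / (π * μ₁))) / 2 := by
        gcongr
        exact integral_abs_igPdf_sub_le h₁ h₁₂ hl
    _ ≤ 2 * r := by
        rw [hr2]
        nlinarith [pi_le_four, sqrt_nonneg (lam / (π * μ₁))]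

/-- TV(IG(μ₁,λ), IG(μ₂,λ)) ≤ 2·√(λ/(π·min{μ₁,μ₂})), stated as the bound holding for
every measurable event. -/
theorem stmt9 (μ₁ μ₂ lam : ℝ) (h₁ : 0 < μ₁) (h₂ : 0 < μ₂) (hl : 0 < lam) :
    ∀ s : Set ℝ, MeasurableSet s →
      |(igMeasure μ₁ lam s).toReal - (igMeasure μ₂ lam s).toReal|
        ≤ 2 * Real.sqrt (lam / (Real.pi * min μ₁ μ₂)) := by
  intro s hs
  rcases le_total μ₁ μ₂ with h | h
  · rw [min_eq_left h]
    exact abs_toReal_igMeasure_sub_le h₁ h hl hs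
  · rw [min_eq_right h, abs_sub_comm]
    exact abs_toReal_igMeasure_sub_le h₂ h hl hs
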